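/- arXiv:2505.07696 — 3 statements merged into one kernel-verified Lean document; each statement's English description precedes it below -/
import Mathlib

section
/- Trilateration in ℝ³ admits at most two solutions: given three affinely independent points p₁, p₂, p₃ ∈ ℝ³ and radii r₁, r₂, r₃ ≥ 0, the set of points x ∈ ℝ³ with ‖x - pᵢ‖ = rᵢ for i = 1,2,3 has at most 2 elements. -/
/-!
Any two solutions are equidistant from each `p i`, so their difference is orthogonal to the
plane through the `p i`. That plane has codimension one, hence all solutions lie on one line,
and a line meets the sphere about `p 0` in at most two points.
-/

open EuclideanGeometry Module

variable {V P : Type*} [NormedAddCommGroup V] [InnerProductSpace ℝ V] [MetricSpace P]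
  [NormedAddTorsor V P]

theorem vectorSpan_le_orthogonal_vectorSpan_of_dist_eq {s t : Set P}
    (h : ∀ x ∈ t, ∀ y ∈ t, ∀ c ∈ s, dist x c = dist y c) :
    vectorSpan ℝ t ≤ (vectorSpan ℝ s)ᗮ := by
  rw [← Submodule.isOrtho_iff_le, vectorSpan_def, vectorSpan_def, Submodule.isOrtho_span]
  rintro _ ⟨x, hx, y, hy, rfl⟩ _ ⟨c₁, hc₁, c₂, hc₂, rfl⟩
  rw [real_inner_comm]
  exact inner_vsub_vsub_of_dist_eq_of_dist_eq (h y hy x hx c₂ hc₂) (h y hy x hx c₁ hc₁)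

theorem collinear_of_forall_dist_eq [FiniteDimensional ℝ V] {s t : Set P}
    (hs : finrank ℝ V ≤ finrank ℝ (vectorSpan ℝ s) + 1)
    (h : ∀ x ∈ t, ∀ y ∈ t, ∀ c ∈ s, dist x c = dist y c) : Collinear ℝ t := by
  rw [collinear_iff_finrank_le_one]
  have := (vectorSpan ℝ s).finrank_add_finrank_orthogonal
  have := Submodule.finrank_mono (vectorSpan_le_orthogonal_vectorSpan_of_dist_eq h)
  omega

theorem Collinear.exists_subset_pair_of_cospherical {t : Set P} (ht : Collinear ℝ t)
    (hsph : Cospherical t) : ∃ a b, t ⊆ {a, b} := by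
  rcases t.eq_empty_or_nonempty with rfl | ⟨a, ha⟩
  · obtain ⟨c, -⟩ := hsph
    exact ⟨c, c, Set.empty_subset _⟩
  by_cases hb : ∃ b ∈ t, b ≠ a
  · obtain ⟨b, hb, hba⟩ := hb
    refine ⟨a, b, fun x hx => ?_⟩
    by_contra hx'
    simp only [Set.mem_insert_iff, Set.mem_singleton_iff, not_or] at hx'
    have := hsph.affineIndependent_of_mem_of_ne ha hb hx hba.symm (Ne.symm hx'.1) (Ne.symm hx'.2)
    rw [affineIndependent_iff_not_collinear_set] at this
    exact this (ht.subset (by simp [Set.insert_subset_iff, ha, hb, hx]))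
  · push Not at hb
    exact ⟨a, a, fun x hx => by simp [hb x hx]⟩

theorem trilateration_at_most_two_solutions_general
    (p : Fin 3 → EuclideanSpace ℝ (Fin 3)) (hp : AffineIndependent ℝ p)
    (r : Fin 3 → ℝ) :
    ∃ a b : EuclideanSpace ℝ (Fin 3),
      {x : EuclideanSpace ℝ (Fin 3) | ∀ i, ‖x - p i‖ = r i} ⊆ {a, b} := by
  set S := {x : EuclideanSpace ℝ (Fin 3) | ∀ i, ‖x - p i‖ = r i}
  have hdist : ∀ x ∈ S, ∀ y ∈ S, ∀ c ∈ Set.range p, dist x c = dist y c := by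
    rintro x hx y hy _ ⟨i, rfl⟩
    rw [dist_eq_norm, dist_eq_norm, hx i, hy i]
  have hrank : finrank ℝ (vectorSpan ℝ (Set.range p)) = 2 := hp.finrank_vectorSpan rfl
  have hcollinear : Collinear ℝ S := collinear_of_forall_dist_eq (by simp [hrank]) hdist
  exact hcollinear.exists_subset_pair_of_cospherical
    ⟨p 0, r 0, fun x hx => by rw [dist_eq_norm, hx 0]⟩

theorem trilateration_at_most_two_solutions
    (p : Fin 3 → EuclideanSpace ℝ (Fin 3)) (hp : AffineIndependent ℝ p)
    (r : Fin 3 → ℝ) (hr : ∀ i, 0 ≤ r i) :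
    ∃ a b : EuclideanSpace ℝ (Fin 3),
      {x : EuclideanSpace ℝ (Fin 3) | ∀ i, ‖x - p i‖ = r i} ⊆ {a, b} :=
  trilateration_at_most_two_solutions_general p hp r
end

section
/- The Cayley–Menger determinant of three points p₀, p₁, p₂ ∈ ℝᵈ vanishes if and only if the points are collinear (affinely dependent). Here CM(p₀,p₁,p₂) is the 4×4 determinant with first row (0,1,1,1), and rows (1, 0, d₀₁², d₀₂²), (1, d₁₀², 0, d₁₂²), (1, d₂₀², d₂₁², 0), where dᵢⱼ = ‖pᵢ - pⱼ‖. -/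
/-!
In the squared side lengths `a = d₀₁²`, `b = d₀₂²`, `c = d₁₂²` the determinant expands to
`(a + b - c)² - 4ab`, and by the law of cosines `a + b - c = 2⟪p₁ - p₀, p₂ - p₀⟫`. So the
determinant is `-4` times the Gram determinant of `p₁ - p₀, p₂ - p₀`, which is
`(sin ∠ p₁ p₀ p₂ · d₀₁ · d₀₂)²` and vanishes exactly when the triangle is degenerate.
-/

open RealInnerProductSpace InnerProductGeometry EuclideanGeometry

theorem Matrix.det_cayleyMenger_three {R : Type*} [CommRing R] (a b c : R) :
    Matrix.det !![0, 1, 1, 1; 1, 0, a, b; 1, a, 0, c; 1, b, c, 0] =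
      (a + b - c) ^ 2 - 4 * a * b := by
  simp [Matrix.det_succ_row_zero, Fin.sum_univ_succ, Fin.succAbove]
  ring

section

variable {V P : Type*} [NormedAddCommGroup V] [InnerProductSpace ℝ V] [MetricSpace P]
  [NormedAddTorsor V P]

theorem InnerProductGeometry.sin_angle_mul_norm_mul_norm_eq_zero_iff (x y : V) :
    Real.sin (angle x y) * (‖x‖ * ‖y‖) = 0 ↔ ⟪x, y⟫ ^ 2 = ‖x‖ ^ 2 * ‖y‖ ^ 2 := by
  rw [sin_angle_mul_norm_mul_norm, Real.sqrt_eq_zero', real_inner_self_eq_norm_sq,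
    real_inner_self_eq_norm_sq]
  have cauchy_schwarz := real_inner_mul_inner_self_le x y
  rw [real_inner_self_eq_norm_sq, real_inner_self_eq_norm_sq] at cauchy_schwarz
  constructor <;> intro h <;> nlinarith

theorem EuclideanGeometry.collinear_iff_inner_vsub_sq_eq_dist_sq_mul_dist_sq (p₀ p₁ p₂ : P) :
    Collinear ℝ ({p₀, p₁, p₂} : Set P) ↔
      ⟪p₁ -ᵥ p₀, p₂ -ᵥ p₀⟫ ^ 2 = dist p₀ p₁ ^ 2 * dist p₀ p₂ ^ 2 := by
  rw [Set.insert_comm, collinear_iff_eq_or_eq_or_sin_eq_zero, dist_comm p₀ p₁, dist_comm p₀ p₂,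
    dist_eq_norm_vsub V p₁, dist_eq_norm_vsub V p₂, ← sin_angle_mul_norm_mul_norm_eq_zero_iff,
    angle, mul_eq_zero, mul_eq_zero, norm_eq_zero, norm_eq_zero, vsub_eq_zero_iff_eq,
    vsub_eq_zero_iff_eq]
  tauto

theorem EuclideanGeometry.dist_sq_add_dist_sq_sub_dist_sq (p₀ p₁ p₂ : P) :
    dist p₀ p₁ ^ 2 + dist p₀ p₂ ^ 2 - dist p₁ p₂ ^ 2 = 2 * ⟪p₁ -ᵥ p₀, p₂ -ᵥ p₀⟫ := by
  rw [dist_comm p₀ p₁, dist_comm p₀ p₂, dist_eq_norm_vsub V p₁, dist_eq_norm_vsub V p₂,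
    dist_eq_norm_vsub V p₁, ← vsub_sub_vsub_cancel_right p₁ p₂ p₀, norm_sub_sq_real]
  ring

end

theorem cayleyMenger_three_points_eq_zero_iff_collinear {d : ℕ}
    (p₀ p₁ p₂ : EuclideanSpace ℝ (Fin d)) :
    Matrix.det
      !![0, 1, 1, 1;
         1, 0, dist p₀ p₁ ^ 2, dist p₀ p₂ ^ 2;
         1, dist p₁ p₀ ^ 2, 0, dist p₁ p₂ ^ 2;
         1, dist p₂ p₀ ^ 2, dist p₂ p₁ ^ 2, 0] = 0 ↔
    Collinear ℝ ({p₀, p₁, p₂} : Set (EuclideanSpace ℝ (Fin d))) := by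
  rw [dist_comm p₁ p₀, dist_comm p₂ p₀, dist_comm p₂ p₁, Matrix.det_cayleyMenger_three,
    dist_sq_add_dist_sq_sub_dist_sq, collinear_iff_inner_vsub_sq_eq_dist_sq_mul_dist_sq]
  constructor <;> intro h <;> linarith
end

section
/- For five points p₀, …, p₄ in ℝ³, the 6×6 Cayley–Menger determinant vanishes: CM(p₀,…,p₄) = 0. -/
/-!
Since `dist x y ^ 2 = ‖x‖ ^ 2 - 2 ⟪x, y⟫ + ‖y‖ ^ 2`, every entry of the Cayley–Menger matrix of
points in `E` is a pairing of a "row lift" in `ℝ × ℝ × E` with a "column lift", linear in the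
row lift. The rows are therefore the images under one linear map of `card ι + 1` vectors of a
space of dimension `finrank E + 2`; with more than `finrank E + 1` points these vectors are
linearly dependent, and so are the rows.
-/

open Module

theorem Matrix.det_eq_zero_of_rows_eq_linearMap {K V n : Type*} [Field K] [AddCommGroup V]
    [Module K V] [FiniteDimensional K V] [Fintype n] [DecidableEq n] (M : Matrix n n K)
    (L : V →ₗ[K] n → K) (u : n → V) (hM : ∀ i, M i = L (u i))
    (hcard : finrank K V < Fintype.card n) : M.det = 0 := by
  have hdep : ¬ LinearIndependent K u := fun h => hcard.not_ge h.fintype_card_le_finrank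
  obtain ⟨c, hc, i, hi⟩ := Fintype.not_linearIndependent_iff.mp hdep
  refine Matrix.exists_vecMul_eq_zero_iff.mp ⟨c, fun h => hi (congrFun h i), ?_⟩
  simp only [Matrix.vecMul_eq_sum, hM, ← map_smul, ← map_sum, hc, map_zero]

section CayleyMenger

variable {E ι : Type*} [NormedAddCommGroup E] [InnerProductSpace ℝ E]

def cayleyMengerMatrix (p : ι → E) : Matrix (Option ι) (Option ι) ℝ :=
  Matrix.of fun i j =>
    match i, j with
    | none, none => 0
    | none, some _ => 1
    | some _, none => 1
    | some i, some j => dist (p i) (p j) ^ 2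

@[simps]
def liftedPairing (w : ℝ × ℝ × E) : ℝ × ℝ × E →ₗ[ℝ] ℝ where
  toFun u := u.1 * w.1 + u.2.1 * w.2.1 + inner ℝ u.2.2 w.2.2
  map_add' u v := by simp only [Prod.fst_add, Prod.snd_add, inner_add_left]; ring
  map_smul' c u := by
    simp only [Prod.smul_fst, Prod.smul_snd, real_inner_smul_left, smul_eq_mul, RingHom.id_apply]
    ring

def cayleyMengerRowLift (p : ι → E) : Option ι → ℝ × ℝ × E
  | none => (1, 0, 0)
  | some i => (‖p i‖ ^ 2, 1, (-2 : ℝ) • p i)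

def cayleyMengerColLift (p : ι → E) : Option ι → ℝ × ℝ × E
  | none => (0, 1, 0)
  | some j => (1, ‖p j‖ ^ 2, p j)

theorem cayleyMengerMatrix_apply (p : ι → E) (i j : Option ι) :
    cayleyMengerMatrix p i j =
      liftedPairing (cayleyMengerColLift p j) (cayleyMengerRowLift p i) := by
  rcases i with _ | i <;> rcases j with _ | j <;>
    simp only [cayleyMengerMatrix, cayleyMengerRowLift, cayleyMengerColLift, Matrix.of_apply,
      liftedPairing_apply, dist_eq_norm, norm_sub_sq_real, inner_zero_left, inner_zero_right,
      real_inner_smul_left] <;>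
    ring

theorem det_cayleyMengerMatrix_eq_zero [FiniteDimensional ℝ E] [Fintype ι] [DecidableEq ι]
    (p : ι → E) (hcard : finrank ℝ E + 1 < Fintype.card ι) :
    (cayleyMengerMatrix p).det = 0 := by
  refine Matrix.det_eq_zero_of_rows_eq_linearMap _
    (LinearMap.pi fun j => liftedPairing (cayleyMengerColLift p j)) (cayleyMengerRowLift p)
    (fun i => funext fun j => cayleyMengerMatrix_apply p i j) ?_
  simp only [finrank_prod, finrank_self, Fintype.card_option]
  omega

end CayleyMenger

theorem cayleyMenger_five_points_in_R3_eq_zero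
    (p : Fin 5 → EuclideanSpace ℝ (Fin 3)) :
    Matrix.det (Matrix.of (fun i j : Option (Fin 5) =>
      match i, j with
      | none, none => (0 : ℝ)
      | none, some _ => 1
      | some _, none => 1
      | some i, some j => dist (p i) (p j) ^ 2)) = 0 := by
  convert det_cayleyMengerMatrix_eq_zero p (by simp) using 2
  -- the two `match` expressions only agree after splitting the cases
  ext (_ | i) (_ | j) <;> rfl
end
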